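/- arXiv:0811.4462 — 3 statements merged into one kernel-verified Lean document; each statement's English description precedes it below -/
import Mathlib

section
/- Classification of H-orbits on regular antidiagonal elements: for all b, c ∈ F^× there is a unique γ ∈ 𝒦 with b/c ∈ γ·(F^×)⁴, and for this γ there exist a ∈ F^× with a² = bc/γ and t ∈ F^× such that diag(t, t⁻¹)⁻¹ · [[0,b],[c,0]] · diag(t, t⁻¹) = [[0, aγ],[a, 0]]. In particular, every antidiagonal trace-zero matrix with nonzero entries is H-conjugate to an element of 𝔱_γ for exactly one γ ∈ 𝒦. -/
open MeasureTheory Matrix Filter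
open scoped Classical Topology Pointwise

noncomputable section

abbrev Mat (F : Type) [Field F] : Type := Matrix (Fin 2) (Fin 2) F

abbrev SL2 (F : Type) [Field F] : Type := Matrix.SpecialLinearGroup (Fin 2) F

instance (F : Type) [Field F] [MeasurableSpace F] : MeasurableSpace (Mat F) :=
  inferInstanceAs (MeasurableSpace (Fin 2 → Fin 2 → F))

instance (F : Type) [Field F] [MeasurableSpace F] : MeasurableSpace (SL2 F) :=
  inferInstanceAs (MeasurableSpace { A : Mat F // A.det = 1 })

instance (F : Type) [Field F] [TopologicalSpace F] : TopologicalSpace (Mat F) :=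
  inferInstanceAs (TopologicalSpace (Fin 2 → Fin 2 → F))

instance (F : Type) [Field F] [TopologicalSpace F] : TopologicalSpace (SL2 F) :=
  inferInstanceAs (TopologicalSpace { A : Mat F // A.det = 1 })

variable {F : Type} [Field F]

/-- The ring of integers of `F`, described via the valuation `ν`. -/
def Oset (ν : F → ℤ) : Set F := {x : F | x = 0 ∨ 0 ≤ ν x}

/-- The maximal compact subgroup `K = SL₂(𝒪)` of `SL₂(F)`. -/
def Kset (ν : F → ℤ) : Set (SL2 F) :=
  {g : SL2 F | ∀ i j : Fin 2, (g : Mat F) i j ∈ Oset ν}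

/-- `CartanLE ν g μ` says that `Cartan(g) = -min_{i,j} ν(g i j) ≤ μ`. -/
def CartanLE (ν : F → ℤ) (g : Mat F) (μ : ℤ) : Prop :=
  ∀ i j : Fin 2, g i j = 0 ∨ -μ ≤ ν (g i j)

/-- The valuation extended by `ν(0) = ⊤`. -/
def nuExt (ν : F → ℤ) (x : F) : WithTop ℤ := if x = 0 then ⊤ else (ν x : WithTop ℤ)

/-- The normalized absolute value `|x| = q^(-ν x)`. -/
def absF (q : ℕ) (ν : F → ℤ) (x : F) : ℝ := if x = 0 then 0 else (q : ℝ) ^ (-(ν x))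

/-- The involution `θ = Inn(diag(1,-1))` on `SL₂(F)`. -/
def thetaSL (g : SL2 F) : SL2 F :=
  ⟨!![(g : Mat F) 0 0, -((g : Mat F) 0 1); -((g : Mat F) 1 0), (g : Mat F) 1 1], by
    have h : ((g : Mat F)).det = 1 := g.2
    rw [Matrix.det_fin_two] at h
    rw [Matrix.det_fin_two_of]
    linear_combination h⟩

/-- The map `τ(g) = θ(g)⁻¹ g`. -/
def tauSL (g : SL2 F) : SL2 F := (thetaSL g)⁻¹ * g

/-- Arthur's truncation function `ω̄(g,μ)`. -/
def omegaBar (ν : F → ℤ) (g : SL2 F) (μ : ℤ) : ℝ :=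
  if CartanLE ν ((tauSL g : Mat F)) μ then 1 else 0

/-- `diag(a, a⁻¹)`, the parametrization of the torus `H`. -/
def Hmat (a : F) : SL2 F :=
  if h : a ≠ 0 then
    ⟨!![a, 0; 0, a⁻¹], by rw [Matrix.det_fin_two_of]; field_simp; ring⟩
  else 1

/-- The parametrization of the split torus `A = {[[x,y],[y,x]] : x² - y² = 1}` by
`t = x + y ∈ F^×`. -/
def Amat [CharZero F] (t : F) : SL2 F :=
  if h : t ≠ 0 then
    ⟨!![(t + t⁻¹) / 2, (t - t⁻¹) / 2; (t - t⁻¹) / 2, (t + t⁻¹) / 2], by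
      rw [Matrix.det_fin_two_of]; field_simp; ring⟩
  else 1

/-- The unipotent radical `N` of the Borel `B` stabilizing `F·(1,1)ᵀ`. -/
def NBel (s : F) : SL2 F :=
  ⟨!![1 + s, -s; s, 1 - s], by rw [Matrix.det_fin_two_of]; ring⟩

/-- The unipotent radical `N̄` of the opposite Borel `B̄` stabilizing `F·(1,-1)ᵀ`. -/
def NBbarel (s : F) : SL2 F :=
  ⟨!![1 + s, s; -s, 1 - s], by rw [Matrix.det_fin_two_of]; ring⟩

/-- Upper triangular unipotent `[[1,s],[0,1]]`. -/
def UpT (s : F) : SL2 F :=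
  ⟨!![1, s; 0, 1], by rw [Matrix.det_fin_two_of]; ring⟩

/-- The element `r_γ` attached to a square root `δ` of `γ`. -/
def rmat [CharZero F] (δ : F) : SL2 F :=
  if h : δ ≠ 0 then
    ⟨!![(1 + δ) / 2, (δ - 1) / 2; (δ - 1) / (2 * δ), (1 + δ) / (2 * δ)], by
      rw [Matrix.det_fin_two_of]; field_simp; ring⟩
  else 1

/-- `diag(ϖ^(-m), ϖ^m)`. -/
def Dmat (ϖ : F) (m : ℤ) : SL2 F :=
  if h : ϖ ≠ 0 then
    ⟨!![ϖ ^ (-m), 0; 0, ϖ ^ m], by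
      have h' : ϖ ^ m ≠ 0 := zpow_ne_zero _ h
      rw [Matrix.det_fin_two_of, _root_.zpow_neg]
      field_simp
      ring⟩
  else 1

/-- Conjugation action: `g⁻¹ X g` for `g ∈ SL₂(F)` and a matrix `X`. -/
def SL2conj (g : SL2 F) (X : Mat F) : Mat F :=
  ((g⁻¹ : SL2 F) : Mat F) * X * ((g : SL2 F) : Mat F)

/-- Coordinates on the Lie algebra `𝔰𝔩₂`: `(a,b,c) ↦ [[a,b],[c,-a]]`. -/
def M3 (v : F × F × F) : Mat F := !![v.1, v.2.1; v.2.2, -v.1]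

/-- The antidiagonal matrix `[[0,b],[c,0]] ∈ 𝔥^⊥`. -/
def antidiag (b c : F) : Mat F := !![0, b; c, 0]

/-- The diagonal matrix `diag(h,-h) ∈ 𝔥`. -/
def diagMat (h : F) : Mat F := !![h, 0; 0, -h]

/-- The Fourier transform on `𝔰𝔩₂(F)` with respect to the character `ψ ∘ tr(XY)` and
the (self-dual) Haar measure `volg` in the coordinates `M3`. -/
def FT [MeasurableSpace F] (ψ : F → ℂ) (volg : Measure (F × F × F))
    (f : Mat F → ℂ) (Y : Mat F) : ℂ :=
  ∫ v : F × F × F, f (M3 v) * ψ ((M3 v * Y).trace) ∂volg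

/-- `f̃(X) = ∫_K f̂(k⁻¹ X k) dk`. -/
def Ktilde [MeasurableSpace F] (ψ : F → ℂ) (volg : Measure (F × F × F))
    (volK : Measure (SL2 F)) (f : Mat F → ℂ) (X : Mat F) : ℂ :=
  ∫ k : SL2 F, FT ψ volg f (SL2conj k X) ∂volK

/-- The diagonal torus `H`, the fixed points of `θ`. -/
def Hset : Set (SL2 F) :=
  {g : SL2 F | (g : Mat F) 0 1 = 0 ∧ (g : Mat F) 1 0 = 0}

/-- The split torus `A`. -/
def Aset : Set (SL2 F) :=
  {g : SL2 F | ∃ x y : F, (g : Mat F) = !![x, y; y, x]}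

/-- The centralizer `T_γ` of `𝔱_γ` in `SL₂(F)`. -/
def Tset (γ : F) : Set (SL2 F) :=
  {g : SL2 F | ∀ b : F, (g : Mat F) * antidiag (b * γ) b = antidiag (b * γ) b * (g : Mat F)}

/-- `d(g) = max(|H_B(g)|, |H_B̄(g)|)`. -/
def dOf (HB HBbar : SL2 F → ℤ) (g : SL2 F) : ℤ := max |HB g| |HBbar g|

/-! Conjugating `[[0,b],[c,0]]` by `diag(t, t⁻¹)` gives `[[0, b/t²],[c t², 0]]`, which lies in `𝔱_γ`
exactly when `b/c = γ t⁴`. So the elements of `𝔱_γ` reachable from `[[0,b],[c,0]]` are indexed by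
the fourth-power class of `b/c`, and the representative `γ ∈ 𝒦` of that class is the unique one. -/

section AntidiagonalConjugation

variable {F : Type} [Field F]

theorem antidiag_eq_antidiag_iff {b c b' c' : F} :
    antidiag b c = antidiag b' c' ↔ b = b' ∧ c = c' := by
  refine ⟨fun h => ⟨?_, ?_⟩, fun ⟨hb, hc⟩ => hb ▸ hc ▸ rfl⟩
  · simpa [antidiag] using congrFun (congrFun h 0) 1
  · simpa [antidiag] using congrFun (congrFun h 1) 0

theorem SL2conj_Hmat_antidiag {t : F} (ht : t ≠ 0) (b c : F) :
    SL2conj (Hmat t) (antidiag b c) = antidiag (b / t ^ 2) (c * t ^ 2) := by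
  have hH : ((Hmat t : SL2 F) : Mat F) = !![t, 0; 0, t⁻¹] := by simp [Hmat, ht]
  rw [SL2conj, Matrix.SpecialLinearGroup.coe_inv, hH, Matrix.adjugate_fin_two_of]
  unfold antidiag
  ext i j
  fin_cases i <;> fin_cases j <;> simp <;> field_simp

theorem SL2conj_Hmat_antidiag_eq_iff {t : F} (ht : t ≠ 0) {c : F} (hc : c ≠ 0) (b a γ : F) :
    SL2conj (Hmat t) (antidiag b c) = antidiag (a * γ) a ↔ a = c * t ^ 2 ∧ b / c = γ * t ^ 4 := by
  rw [SL2conj_Hmat_antidiag ht, antidiag_eq_antidiag_iff, eq_comm (a := c * t ^ 2), and_comm]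
  refine and_congr_right fun ha => ?_
  subst ha
  constructor <;> intro h <;> field_simp at h ⊢ <;> linear_combination h

theorem mul_sq_sq_eq_mul_div_of_div_eq {b c γ t : F} (hc : c ≠ 0) (hγ : γ ≠ 0)
    (h : b / c = γ * t ^ 4) :
    (c * t ^ 2) ^ 2 = b * c / γ := by
  field_simp at h ⊢
  linear_combination -h

end AntidiagonalConjugation

theorem H_orbit_classification_general
    (F : Type) [Field F]
    (𝒦 : Finset F)
    (h𝒦rep : ∀ x : F, x ≠ 0 → ∃! γ : F, γ ∈ 𝒦 ∧ ∃ t : F, t ≠ 0 ∧ x = γ * t ^ 4) :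
    ∀ b c : F, b ≠ 0 → c ≠ 0 →
      (∃! γ : F, γ ∈ 𝒦 ∧ ∃ t : F, t ≠ 0 ∧ b / c = γ * t ^ 4) ∧
      (∀ γ ∈ 𝒦, (∃ t : F, t ≠ 0 ∧ b / c = γ * t ^ 4) →
        ∃ a t : F, a ≠ 0 ∧ t ≠ 0 ∧ a ^ 2 = b * c / γ ∧
          SL2conj (Hmat t) (antidiag b c) = antidiag (a * γ) a) ∧
      (∃! γ : F, γ ∈ 𝒦 ∧ ∃ t a : F, t ≠ 0 ∧ a ≠ 0 ∧
        SL2conj (Hmat t) (antidiag b c) = antidiag (a * γ) a) := by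
  intro b c hb hc
  have hbc : b / c ≠ 0 := div_ne_zero hb hc
  obtain ⟨γ, ⟨hγ𝒦, t, ht, hγt⟩, hγ_unique⟩ := h𝒦rep (b / c) hbc
  have conj_of_class : ∀ γ' t', t' ≠ 0 → b / c = γ' * t' ^ 4 →
      SL2conj (Hmat t') (antidiag b c) = antidiag (c * t' ^ 2 * γ') (c * t' ^ 2) :=
    fun γ' t' ht' h => (SL2conj_Hmat_antidiag_eq_iff ht' hc b _ γ').2 ⟨rfl, h⟩
  refine ⟨⟨γ, ⟨hγ𝒦, t, ht, hγt⟩, hγ_unique⟩, ?_, ?_⟩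
  · rintro γ' - ⟨t', ht', h⟩
    have hγ' : γ' ≠ 0 := left_ne_zero_of_mul (h ▸ hbc)
    exact ⟨c * t' ^ 2, t', by positivity, ht', mul_sq_sq_eq_mul_div_of_div_eq hc hγ' h,
      conj_of_class γ' t' ht' h⟩
  · refine ⟨γ, ⟨hγ𝒦, t, c * t ^ 2, ht, by positivity, conj_of_class γ t ht hγt⟩, ?_⟩
    rintro γ' ⟨hγ'𝒦, t', a', ht', -, hconj⟩
    exact hγ_unique γ'
      ⟨hγ'𝒦, t', ht', ((SL2conj_Hmat_antidiag_eq_iff ht' hc b a' γ').1 hconj).2⟩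

theorem H_orbit_classification
    (p : ℕ) [Fact p.Prime] (hp2 : p ≠ 2)
    (F : Type) [Field F] [CharZero F] [TopologicalSpace F] [IsTopologicalRing F]
    [MeasurableSpace F] [BorelSpace F]
    [Algebra ℚ_[p] F] [FiniteDimensional ℚ_[p] F]
    (ν : F → ℤ) (ϖ : F)
    (hϖ0 : ϖ ≠ 0) (hϖ1 : ν ϖ = 1)
    (hνmul : ∀ x y : F, x ≠ 0 → y ≠ 0 → ν (x * y) = ν x + ν y)
    (hνadd : ∀ x y : F, x ≠ 0 → y ≠ 0 → x + y ≠ 0 → min (ν x) (ν y) ≤ ν (x + y))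
    (hνp : 0 < ν ((p : F)))
    (hνext : ∀ x : ℚ_[p], x ≠ 0 → ν (algebraMap ℚ_[p] F x) = ν ((p : F)) * x.valuation)
    (hνnhds : ∀ s : Set F, s ∈ nhds (0 : F) ↔ ∃ n : ℤ, {x : F | x = 0 ∨ n ≤ ν x} ⊆ s)
    (𝒦 𝒦' : Finset F) (μ4 : ℕ)
    (h𝒦1 : (1 : F) ∈ 𝒦)
    (h𝒦0 : ∀ γ ∈ 𝒦, γ ≠ 0)
    (h𝒦rep : ∀ x : F, x ≠ 0 → ∃! γ : F, γ ∈ 𝒦 ∧ ∃ t : F, t ≠ 0 ∧ x = γ * t ^ 4)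
    (h𝒦' : ∀ γ : F, γ ∈ 𝒦' ↔ γ ∈ 𝒦 ∧ ∃ δ : F, δ ≠ 0 ∧ δ ^ 2 = γ)
    (hμ4 : μ4 = Nat.card {x : F // x ^ 4 = 1}) (hμ4pos : 0 < μ4) :
    ∀ b c : F, b ≠ 0 → c ≠ 0 →
      (∃! γ : F, γ ∈ 𝒦 ∧ ∃ t : F, t ≠ 0 ∧ b / c = γ * t ^ 4) ∧
      (∀ γ ∈ 𝒦, (∃ t : F, t ≠ 0 ∧ b / c = γ * t ^ 4) →
        ∃ a t : F, a ≠ 0 ∧ t ≠ 0 ∧ a ^ 2 = b * c / γ ∧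
          SL2conj (Hmat t) (antidiag b c) = antidiag (a * γ) a) ∧
      (∃! γ : F, γ ∈ 𝒦 ∧ ∃ t a : F, t ≠ 0 ∧ a ≠ 0 ∧
        SL2conj (Hmat t) (antidiag b c) = antidiag (a * γ) a) :=
  H_orbit_classification_general F 𝒦 h𝒦rep

end
end

section
/- Cartan decomposition of SL₂ over a p-adic field: for every g ∈ SL₂(F), setting m := −min{ν(g₁₁), ν(g₁₂), ν(g₂₁), ν(g₂₂)}, one has m ≥ 0 and there exist k₁, k₂ ∈ K = SL₂(𝒪) with g = k₁ · diag(ϖ^(−m), ϖ^m) · k₂. -/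
open MeasureTheory Matrix Filter
open scoped Classical Topology Pointwise

noncomputable section

variable {F : Type} [Field F]

/-!
Let `-m` be the least valuation of an entry of `g`. Multiplying `g` on either side by the Weyl
element `[[0,1],[-1,0]] ∈ K` moves an entry of least valuation to the corner `(0,0)`, and `K`
does not lower valuations of entries. With `a = g₀₀` of valuation `-m`, the Gauss decomposition
`g = [[1,0],[c/a,1]] · diag(a, a⁻¹) · [[1,b/a],[0,1]]` has unipotent factors in `K` by minimality
of `ν a`, and `diag(a, a⁻¹) = diag(u, u⁻¹) · diag(ϖ^(-m), ϖ^m)` with `u = a ϖ^m` a unit.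
Finally `m ≥ 0` because `1 = det g` has valuation at least `-2m`.
-/

lemma nu_one_eq_zero {ν : F → ℤ}
    (hνmul : ∀ x y : F, x ≠ 0 → y ≠ 0 → ν (x * y) = ν x + ν y) : ν 1 = 0 := by
  have h := hνmul 1 1 one_ne_zero one_ne_zero
  rw [mul_one] at h
  omega

def nuExtAddValuation (ν : F → ℤ)
    (hνmul : ∀ x y : F, x ≠ 0 → y ≠ 0 → ν (x * y) = ν x + ν y)
    (hνadd : ∀ x y : F, x ≠ 0 → y ≠ 0 → x + y ≠ 0 → min (ν x) (ν y) ≤ ν (x + y)) :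
    AddValuation F (WithTop ℤ) :=
  AddValuation.of (nuExt ν) (by simp [nuExt]) (by simp [nuExt, nu_one_eq_zero hνmul])
    (fun x y => by
      by_cases hx : x = 0
      · simp [hx]
      by_cases hy : y = 0
      · simp [hy]
      by_cases hxy : x + y = 0
      · simp [nuExt, hxy]
      simp only [nuExt, if_neg hx, if_neg hy, if_neg hxy]
      exact_mod_cast hνadd x y hx hy hxy)
    (fun x y => by
      by_cases hx : x = 0
      · simp [nuExt, hx]
      by_cases hy : y = 0
      · simp [nuExt, hy]
      simp only [nuExt, if_neg hx, if_neg hy, if_neg (mul_ne_zero hx hy)]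
      exact_mod_cast hνmul x y hx hy)

@[simp]
lemma nuExtAddValuation_apply (ν : F → ℤ)
    (hνmul : ∀ x y : F, x ≠ 0 → y ≠ 0 → ν (x * y) = ν x + ν y)
    (hνadd : ∀ x y : F, x ≠ 0 → y ≠ 0 → x + y ≠ 0 → min (ν x) (ν y) ≤ ν (x + y)) (x : F) :
    nuExtAddValuation ν hνmul hνadd x = nuExt ν x := rfl

lemma mem_Oset_iff_nonneg_nuExt {ν : F → ℤ} {x : F} : x ∈ Oset ν ↔ 0 ≤ nuExt ν x := by
  by_cases hx : x = 0 <;> simp [Oset, nuExt, hx]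

lemma min_fin_two_le {α : Type*} [LinearOrder α] (f : Fin 2 → Fin 2 → α) (i j : Fin 2) :
    min (min (f 0 0) (f 0 1)) (min (f 1 0) (f 1 1)) ≤ f i j := by
  fin_cases i <;> fin_cases j <;> simp

lemma exists_eq_min_fin_two {α : Type*} [LinearOrder α] (f : Fin 2 → Fin 2 → α) :
    ∃ i j, f i j = min (min (f 0 0) (f 0 1)) (min (f 1 0) (f 1 1)) := by
  rcases min_choice (min (f 0 0) (f 0 1)) (min (f 1 0) (f 1 1)) with h | h <;> rw [h]
  · rcases min_choice (f 0 0) (f 0 1) with h' | h' <;> rw [h'] <;> exact ⟨_, _, rfl⟩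
  · rcases min_choice (f 1 0) (f 1 1) with h' | h' <;> rw [h'] <;> exact ⟨_, _, rfl⟩

def LowT (s : F) : SL2 F :=
  ⟨!![1, 0; s, 1], by rw [Matrix.det_fin_two_of]; ring⟩

def weylS : SL2 F :=
  ⟨!![0, 1; -1, 0], by rw [Matrix.det_fin_two_of]; ring⟩

lemma coe_Hmat {a : F} (ha : a ≠ 0) : (Hmat a : Mat F) = !![a, 0; 0, a⁻¹] := by
  simp [Hmat, ha]

lemma Hmat_mul {a b : F} (ha : a ≠ 0) (hb : b ≠ 0) : Hmat (a * b) = Hmat a * Hmat b := by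
  refine Subtype.ext ?_
  rw [Matrix.SpecialLinearGroup.coe_mul, coe_Hmat ha, coe_Hmat hb, coe_Hmat (mul_ne_zero ha hb),
    Matrix.mul_fin_two, mul_inv, mul_comm a⁻¹]
  simp

lemma Dmat_eq_Hmat {ϖ : F} (hϖ : ϖ ≠ 0) (m : ℤ) : Dmat ϖ m = Hmat (ϖ ^ (-m)) := by
  refine Subtype.ext ?_
  rw [coe_Hmat (zpow_ne_zero _ hϖ), _root_.zpow_neg, inv_inv]
  simp [Dmat, hϖ]

lemma eq_LowT_mul_Hmat_mul_UpT (g : SL2 F) (ha : (g : Mat F) 0 0 ≠ 0) :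
    g = LowT ((g : Mat F) 1 0 / (g : Mat F) 0 0) * Hmat ((g : Mat F) 0 0) *
      UpT ((g : Mat F) 0 1 / (g : Mat F) 0 0) := by
  have hdet : (g : Mat F) 0 0 * (g : Mat F) 1 1 - (g : Mat F) 0 1 * (g : Mat F) 1 0 = 1 := by
    rw [← Matrix.det_fin_two]; exact g.2
  refine Subtype.ext ?_
  rw [Matrix.SpecialLinearGroup.coe_mul, Matrix.SpecialLinearGroup.coe_mul, coe_Hmat ha,
    Matrix.eta_fin_two (g : Mat F)]
  simp only [LowT, UpT, Matrix.mul_fin_two]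
  ext i j
  fin_cases i <;> fin_cases j <;> simp <;> field_simp
  linear_combination hdet

lemma coe_weylS_mul (g : SL2 F) :
    ((weylS * g : SL2 F) : Mat F) =
      !![(g : Mat F) 1 0, (g : Mat F) 1 1; -(g : Mat F) 0 0, -(g : Mat F) 0 1] := by
  rw [Matrix.SpecialLinearGroup.coe_mul, Matrix.eta_fin_two (g : Mat F)]
  simp [weylS]

lemma coe_mul_weylS (g : SL2 F) :
    ((g * weylS : SL2 F) : Mat F) =
      !![-(g : Mat F) 0 1, (g : Mat F) 0 0; -(g : Mat F) 1 1, (g : Mat F) 1 0] := by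
  rw [Matrix.SpecialLinearGroup.coe_mul, Matrix.eta_fin_two (g : Mat F)]
  simp [weylS]

section Valuation

variable (v : AddValuation F (WithTop ℤ))

lemma AddValuation.map_zpow_of_eq_one {ϖ : F} (hϖ : v ϖ = 1) (n : ℤ) : v (ϖ ^ n) = n := by
  have hϖ0 : ϖ ≠ 0 := by rintro rfl; simp at hϖ
  induction n using Int.induction_on with
  | zero => simp
  | succ k ih => rw [zpow_add_one₀ hϖ0, v.map_mul, ih, hϖ]; norm_cast
  | pred k ih => rw [zpow_sub_one₀ hϖ0, v.map_mul, ih, v.map_inv, hϖ]; norm_cast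

lemma AddValuation.nonneg_map_div {x y : F} (hy : v y ≠ ⊤) (h : v y ≤ v x) :
    0 ≤ v (x / y) := by
  rw [v.map_div, ← LinearOrderedAddCommGroupWithTop.sub_self_eq_zero_iff_ne_top.2 hy]
  exact (LinearOrderedAddCommGroupWithTop.sub_le_sub_iff_left_of_ne_top hy).2 h

lemma le_val_mul_apply {g h : Mat F} {a b : WithTop ℤ} (hg : ∀ i j, a ≤ v (g i j))
    (hh : ∀ i j, b ≤ v (h i j)) (i j : Fin 2) : a + b ≤ v ((g * h) i j) := by
  rw [Matrix.mul_apply, Fin.sum_univ_two]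
  refine v.map_le_add ?_ ?_ <;> rw [v.map_mul] <;> exact add_le_add (hg _ _) (hh _ _)

def SL2int : Subgroup (SL2 F) where
  carrier := {g | ∀ i j, 0 ≤ v ((g : Mat F) i j)}
  mul_mem' {g h} hg hh i j := by
    simpa using le_val_mul_apply v hg hh i j
  one_mem' i j := by
    fin_cases i <;> fin_cases j <;> simp
  inv_mem' {g} hg i j := by
    rw [Matrix.SpecialLinearGroup.SL2_inv_expl]
    fin_cases i <;> fin_cases j <;> simp [hg 0 0, hg 0 1, hg 1 0, hg 1 1]

lemma LowT_mem_SL2int {s : F} (hs : 0 ≤ v s) : LowT s ∈ SL2int v := by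
  intro i j
  fin_cases i <;> fin_cases j <;> simp [LowT, hs]

lemma UpT_mem_SL2int {s : F} (hs : 0 ≤ v s) : UpT s ∈ SL2int v := by
  intro i j
  fin_cases i <;> fin_cases j <;> simp [UpT, hs]

lemma Hmat_mem_SL2int {u : F} (hu : v u = 0) : Hmat u ∈ SL2int v := by
  have hu0 : u ≠ 0 := by rintro rfl; simp at hu
  intro i j
  fin_cases i <;> fin_cases j <;> simp [Hmat, hu0, hu]

lemma weylS_mem_SL2int : weylS ∈ SL2int v := by
  intro i j
  fin_cases i <;> fin_cases j <;> simp [weylS]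

lemma nonneg_of_le_val_apply (g : SL2 F) {m : ℤ}
    (hge : ∀ i j, ((-m : ℤ) : WithTop ℤ) ≤ v ((g : Mat F) i j)) : 0 ≤ m := by
  have hdet : (g : Mat F) 0 0 * (g : Mat F) 1 1 - (g : Mat F) 0 1 * (g : Mat F) 1 0 = 1 := by
    rw [← Matrix.det_fin_two]; exact g.2
  have h : (((-m + -m : ℤ)) : WithTop ℤ) ≤ 0 := by
    rw [← v.map_one, ← hdet, WithTop.coe_add]
    refine le_trans (le_min ?_ ?_) (v.map_sub _ _) <;> rw [v.map_mul] <;>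
      exact add_le_add (hge _ _) (hge _ _)
  have : -m + -m ≤ 0 := by exact_mod_cast h
  omega

lemma exists_val_mul_mul_apply_zero_zero_eq (g : SL2 F) (i j : Fin 2) :
    ∃ k₁ ∈ SL2int v, ∃ k₂ ∈ SL2int v,
      v (((k₁ * g * k₂ : SL2 F) : Mat F) 0 0) = v ((g : Mat F) i j) := by
  have hS := weylS_mem_SL2int v
  fin_cases i <;> fin_cases j
  · exact ⟨1, one_mem _, 1, one_mem _, by simp⟩
  · exact ⟨1, one_mem _, weylS, hS, by rw [one_mul, coe_mul_weylS]; simp⟩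
  · exact ⟨weylS, hS, 1, one_mem _, by rw [mul_one, coe_weylS_mul]; simp⟩
  · exact ⟨weylS, hS, weylS, hS, by rw [coe_mul_weylS, coe_weylS_mul]; simp⟩

lemma exists_eq_mul_Dmat_mul_of_val_apply_zero_zero {ϖ : F} (hϖ : v ϖ = 1) {g : SL2 F} {m : ℤ}
    (hge : ∀ i j, ((-m : ℤ) : WithTop ℤ) ≤ v ((g : Mat F) i j))
    (h00 : v ((g : Mat F) 0 0) = (-m : ℤ)) :
    ∃ k₁ ∈ SL2int v, ∃ k₂ ∈ SL2int v, g = k₁ * Dmat ϖ m * k₂ := by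
  set a := (g : Mat F) 0 0
  have ha_top : v a ≠ ⊤ := by simp [h00]
  have ha : a ≠ 0 := v.ne_top_iff.1 ha_top
  have hϖ0 : ϖ ≠ 0 := by rintro rfl; simp at hϖ
  have hu : v (a * ϖ ^ m) = 0 := by
    rw [v.map_mul, h00, v.map_zpow_of_eq_one hϖ, ← WithTop.coe_add, neg_add_cancel]; rfl
  have hHa : Hmat a = Hmat (a * ϖ ^ m) * Dmat ϖ m := by
    rw [Dmat_eq_Hmat hϖ0, ← Hmat_mul (mul_ne_zero ha (zpow_ne_zero _ hϖ0)) (zpow_ne_zero _ hϖ0),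
      mul_assoc, ← zpow_add₀ hϖ0, add_neg_cancel, zpow_zero, mul_one]
  refine ⟨LowT ((g : Mat F) 1 0 / a) * Hmat (a * ϖ ^ m),
    mul_mem (LowT_mem_SL2int v (v.nonneg_map_div ha_top (h00 ▸ hge 1 0)))
      (Hmat_mem_SL2int v hu),
    UpT ((g : Mat F) 0 1 / a), UpT_mem_SL2int v (v.nonneg_map_div ha_top (h00 ▸ hge 0 1)), ?_⟩
  rw [mul_assoc _ (Hmat _), ← hHa]
  exact eq_LowT_mul_Hmat_mul_UpT g ha

theorem cartan_decomposition {ϖ : F} (hϖ : v ϖ = 1) (g : SL2 F) {m : ℤ}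
    (hge : ∀ i j, ((-m : ℤ) : WithTop ℤ) ≤ v ((g : Mat F) i j))
    (hattained : ∃ i j, v ((g : Mat F) i j) = (-m : ℤ)) :
    ∃ k₁ ∈ SL2int v, ∃ k₂ ∈ SL2int v, g = k₁ * Dmat ϖ m * k₂ := by
  obtain ⟨i, j, hij⟩ := hattained
  obtain ⟨k₁, hk₁, k₂, hk₂, h00⟩ := exists_val_mul_mul_apply_zero_zero_eq v g i j
  have hge_kgk : ∀ i j, ((-m : ℤ) : WithTop ℤ) ≤ v (((k₁ * g * k₂ : SL2 F) : Mat F) i j) := by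
    intro i j
    simpa using le_val_mul_apply v (le_val_mul_apply v hk₁ hge) hk₂ i j
  obtain ⟨l₁, hl₁, l₂, hl₂, hkgk⟩ :=
    exists_eq_mul_Dmat_mul_of_val_apply_zero_zero v hϖ hge_kgk (h00.trans hij)
  refine ⟨k₁⁻¹ * l₁, mul_mem (inv_mem hk₁) hl₁, l₂ * k₂⁻¹, mul_mem hl₂ (inv_mem hk₂), ?_⟩
  rw [← mul_inv_cancel_right g k₂, ← inv_mul_cancel_left k₁ (g * k₂), ← mul_assoc k₁, hkgk]
  group

end Valuation

lemma Kset_eq_SL2int (ν : F → ℤ)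
    (hνmul : ∀ x y : F, x ≠ 0 → y ≠ 0 → ν (x * y) = ν x + ν y)
    (hνadd : ∀ x y : F, x ≠ 0 → y ≠ 0 → x + y ≠ 0 → min (ν x) (ν y) ≤ ν (x + y)) :
    Kset ν = SL2int (nuExtAddValuation ν hνmul hνadd) := by
  ext g
  simp [Kset, SL2int, mem_Oset_iff_nonneg_nuExt]

theorem cartan_decomposition_SL2_general
    (F : Type) [Field F]
    (ν : F → ℤ) (ϖ : F)
    (hϖ0 : ϖ ≠ 0) (hϖ1 : ν ϖ = 1)
    (hνmul : ∀ x y : F, x ≠ 0 → y ≠ 0 → ν (x * y) = ν x + ν y)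
    (hνadd : ∀ x y : F, x ≠ 0 → y ≠ 0 → x + y ≠ 0 → min (ν x) (ν y) ≤ ν (x + y)) :
    ∀ g : SL2 F, ∀ m : ℤ,
      ((-m : ℤ) : WithTop ℤ) =
        min (min (nuExt ν ((g : Mat F) 0 0)) (nuExt ν ((g : Mat F) 0 1)))
            (min (nuExt ν ((g : Mat F) 1 0)) (nuExt ν ((g : Mat F) 1 1))) →
      0 ≤ m ∧ ∃ k₁ ∈ Kset ν, ∃ k₂ ∈ Kset ν, g = k₁ * Dmat ϖ m * k₂ := by
  intro g m hmin
  set v := nuExtAddValuation ν hνmul hνadd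
  have hge : ∀ i j, ((-m : ℤ) : WithTop ℤ) ≤ v ((g : Mat F) i j) := fun i j =>
    hmin ▸ min_fin_two_le (fun i j => nuExt ν ((g : Mat F) i j)) i j
  have hattained : ∃ i j, v ((g : Mat F) i j) = (-m : ℤ) :=
    hmin ▸ exists_eq_min_fin_two (fun i j => nuExt ν ((g : Mat F) i j))
  have hϖ : v ϖ = 1 := by simp [v, nuExt, hϖ0, hϖ1]
  rw [Kset_eq_SL2int ν hνmul hνadd]
  exact ⟨nonneg_of_le_val_apply v g hge, cartan_decomposition v hϖ g hge hattained⟩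

theorem cartan_decomposition_SL2
    (p : ℕ) [Fact p.Prime] (hp2 : p ≠ 2)
    (F : Type) [Field F] [CharZero F] [TopologicalSpace F] [IsTopologicalRing F]
    [MeasurableSpace F] [BorelSpace F]
    [Algebra ℚ_[p] F] [FiniteDimensional ℚ_[p] F]
    (ν : F → ℤ) (ϖ : F)
    (hϖ0 : ϖ ≠ 0) (hϖ1 : ν ϖ = 1)
    (hνmul : ∀ x y : F, x ≠ 0 → y ≠ 0 → ν (x * y) = ν x + ν y)
    (hνadd : ∀ x y : F, x ≠ 0 → y ≠ 0 → x + y ≠ 0 → min (ν x) (ν y) ≤ ν (x + y))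
    (hνp : 0 < ν ((p : F)))
    (hνext : ∀ x : ℚ_[p], x ≠ 0 → ν (algebraMap ℚ_[p] F x) = ν ((p : F)) * x.valuation)
    (hνnhds : ∀ s : Set F, s ∈ nhds (0 : F) ↔ ∃ n : ℤ, {x : F | x = 0 ∨ n ≤ ν x} ⊆ s) :
    ∀ g : SL2 F, ∀ m : ℤ,
      ((-m : ℤ) : WithTop ℤ) =
        min (min (nuExt ν ((g : Mat F) 0 0)) (nuExt ν ((g : Mat F) 0 1)))
            (min (nuExt ν ((g : Mat F) 1 0)) (nuExt ν ((g : Mat F) 1 1))) →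
      0 ≤ m ∧ ∃ k₁ ∈ Kset ν, ∃ k₂ ∈ Kset ν, g = k₁ * Dmat ϖ m * k₂ :=
  cartan_decomposition_SL2_general F ν ϖ hϖ0 hϖ1 hνmul hνadd

end
end

section
/- Let γ ∈ (F^×)² with chosen square root δ (δ² = γ, δ ≠ −1). Then the matrix r_γ := [[(1+δ)/2, (δ−1)/2],[(δ−1)/(2δ), (1+δ)/(2δ)]] has determinant 1, it satisfies r_γ⁻¹ · T_γ · r_γ = A where T_γ is the centralizer in SL₂(F) of 𝔱_γ = {[[0,bγ],[b,0]] : b ∈ F}, and r_γ⁻¹ · θ(r_γ) = [[(γ+1)/(2δ), (1−γ)/(2δ)],[(1−γ)/(2δ), (γ+1)/(2δ)]], which lies in A and has eigenvalue δ⁻¹ on the vector (1,1)ᵀ and eigenvalue δ on the vector (1,−1)ᵀ. -/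
open MeasureTheory Matrix Filter
open scoped Classical Topology Pointwise

noncomputable section

variable {F : Type} [Field F]

/-!
With `γ = δ²`, the matrix `r_γ` conjugates the generator `[[0, γ], [1, 0]]` of `𝔱_γ` to
`δ • [[0, 1], [1, 0]]`, and the centralizer of `[[0, 1], [1, 0]]` in `SL₂(F)` is exactly `A`;
hence `r_γ⁻¹ T_γ r_γ = A`. A direct computation shows that `r_γ⁻¹ θ(r_γ)` has the shape
`[[a, b], [b, a]]`, so it lies in `A` and has eigenvectors `(1, ±1)` with eigenvalues `a ± b`.
-/

lemma commute_conj_iff {M : Type*} [Monoid M] {r s g Y : M} (hsr : s * r = 1)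
    (hrs : r * s = 1) : Commute (s * g * r) Y ↔ Commute g (r * Y * s) := by
  have cancel_rs (x : M) : r * (s * x) = x := by rw [← mul_assoc, hrs, one_mul]
  have cancel_sr (x : M) : s * (r * x) = x := by rw [← mul_assoc, hsr, one_mul]
  simp only [commute_iff_eq]
  constructor
  · intro h
    calc g * (r * Y * s) = r * (s * g * r * Y) * s := by simp only [mul_assoc, cancel_rs]
      _ = r * (Y * (s * g * r)) * s := by rw [h]
      _ = r * Y * s * g := by simp only [mul_assoc, hrs, mul_one]
  · intro h
    calc s * g * r * Y = s * (g * (r * Y * s)) * r := by simp only [mul_assoc, hsr, mul_one]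
      _ = s * (r * Y * s * g) * r := by rw [h]
      _ = Y * (s * g * r) := by simp only [mul_assoc, cancel_sr]

lemma mem_Tset_iff_commute (γ : F) (g : SL2 F) :
    g ∈ Tset γ ↔ Commute (g : Mat F) (antidiag γ 1) := by
  have antidiag_eq_smul (b : F) : antidiag (b * γ) b = b • antidiag γ 1 := by
    ext i j; fin_cases i <;> fin_cases j <;> simp [antidiag, mul_comm]
  simp only [Tset, antidiag_eq_smul, Matrix.mul_smul, Matrix.smul_mul]
  exact ⟨fun h => by simpa [commute_iff_eq] using h 1, fun h b => by rw [h.eq]⟩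

lemma mem_Aset_iff_commute (g : SL2 F) :
    g ∈ Aset ↔ Commute (g : Mat F) (antidiag 1 1) := by
  rw [commute_iff_eq, ← Matrix.ext_iff, Fin.forall_fin_two, Fin.forall_fin_two,
    Fin.forall_fin_two]
  simp only [antidiag, Matrix.mul_apply, of_apply, cons_val', cons_val_zero, cons_val_one,
    cons_val_fin_one, Fin.sum_univ_two, mul_zero, mul_one, zero_add, zero_mul, one_mul, add_zero]
  constructor
  · rintro ⟨x, y, hg⟩
    simp [hg]
  · rintro ⟨⟨h01, h00⟩, -⟩
    refine ⟨(g : Mat F) 0 0, (g : Mat F) 0 1, ?_⟩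
    ext i j; fin_cases i <;> fin_cases j <;> simp [h00, h01]

lemma commute_conj_SL2_iff {r g : SL2 F} {X Y : Mat F} {c : F} (hc : c ≠ 0)
    (hXY : X * (r : Mat F) = c • ((r : Mat F) * Y)) :
    Commute ((r⁻¹ * g * r : SL2 F) : Mat F) Y ↔ Commute (g : Mat F) X := by
  have hX : X = c • ((r : Mat F) * Y * ((r⁻¹ : SL2 F) : Mat F)) := by
    rw [← smul_mul_assoc, ← hXY, mul_assoc, ← Matrix.SpecialLinearGroup.coe_mul,
      mul_inv_cancel, Matrix.SpecialLinearGroup.coe_one, mul_one]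
  rw [hX, Commute.smul_right_iff₀ hc, Matrix.SpecialLinearGroup.coe_mul,
    Matrix.SpecialLinearGroup.coe_mul]
  exact commute_conj_iff (by rw [← Matrix.SpecialLinearGroup.coe_mul, inv_mul_cancel]; rfl)
    (by rw [← Matrix.SpecialLinearGroup.coe_mul, mul_inv_cancel]; rfl)

lemma coe_thetaSL (g : SL2 F) :
    (thetaSL g : Mat F) =
      !![(g : Mat F) 0 0, -(g : Mat F) 0 1; -(g : Mat F) 1 0, (g : Mat F) 1 1] :=
  rfl

lemma mulVec_one_one_of_symm (a b : F) : !![a, b; b, a] *ᵥ ![1, 1] = (a + b) • ![1, 1] := by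
  ext i; fin_cases i <;> simp [Matrix.mulVec, dotProduct, Fin.sum_univ_two, add_comm]

lemma mulVec_one_neg_one_of_symm (a b : F) :
    !![a, b; b, a] *ᵥ ![1, -1] = (a - b) • ![1, -1] := by
  ext i; fin_cases i <;> simp [Matrix.mulVec, dotProduct, Fin.sum_univ_two] <;> ring

section rmat

variable [CharZero F] {δ : F}

lemma coe_rmat (hδ : δ ≠ 0) : (rmat δ : Mat F) =
    !![(1 + δ) / 2, (δ - 1) / 2; (δ - 1) / (2 * δ), (1 + δ) / (2 * δ)] := by
  simp [rmat, hδ]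

lemma antidiag_sq_mul_rmat (hδ : δ ≠ 0) :
    antidiag (δ ^ 2) 1 * (rmat δ : Mat F) = δ • ((rmat δ : Mat F) * antidiag 1 1) := by
  rw [coe_rmat hδ]
  ext i j
  fin_cases i <;> fin_cases j <;>
    simp [antidiag, Matrix.mul_apply, Fin.sum_univ_two] <;> field_simp

lemma image_conj_rmat_Tset (hδ : δ ≠ 0) :
    (fun g : SL2 F => (rmat δ)⁻¹ * g * rmat δ) '' Tset (δ ^ 2) = Aset := by
  rw [Set.image_eq_preimage_of_inverse (g := fun g => rmat δ * g * (rmat δ)⁻¹)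
    (fun g => by group) (fun g => by group)]
  ext g
  rw [Set.mem_preimage, mem_Tset_iff_commute, mem_Aset_iff_commute,
    ← commute_conj_SL2_iff hδ (antidiag_sq_mul_rmat hδ),
    show (rmat δ)⁻¹ * (rmat δ * g * (rmat δ)⁻¹) * rmat δ = g by group]

lemma coe_rmat_inv_mul_thetaSL_rmat (hδ : δ ≠ 0) :
    (((rmat δ)⁻¹ * thetaSL (rmat δ) : SL2 F) : Mat F) =
      !![(δ ^ 2 + 1) / (2 * δ), (1 - δ ^ 2) / (2 * δ);
        (1 - δ ^ 2) / (2 * δ), (δ ^ 2 + 1) / (2 * δ)] := by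
  rw [Matrix.SpecialLinearGroup.coe_mul, Matrix.SpecialLinearGroup.coe_inv, coe_thetaSL,
    coe_rmat hδ, Matrix.adjugate_fin_two_of]
  ext i j
  fin_cases i <;> fin_cases j <;>
    simp [Matrix.mul_apply, Fin.sum_univ_two] <;> field_simp <;> ring

end rmat

theorem rgamma_properties_general
    (F : Type) [Field F] [CharZero F] :
    ∀ γ δ : F, δ ≠ 0 → δ ^ 2 = γ → δ ≠ -1 →
      ((rmat δ : SL2 F) : Mat F).det = 1 ∧
      (fun g : SL2 F => (rmat δ)⁻¹ * g * rmat δ) '' Tset γ = (Aset : Set (SL2 F)) ∧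
      (((rmat δ)⁻¹ * thetaSL (rmat δ) : SL2 F) : Mat F) =
        !![(γ + 1) / (2 * δ), (1 - γ) / (2 * δ); (1 - γ) / (2 * δ), (γ + 1) / (2 * δ)] ∧
      ((rmat δ)⁻¹ * thetaSL (rmat δ) : SL2 F) ∈ (Aset : Set (SL2 F)) ∧
      (!![(γ + 1) / (2 * δ), (1 - γ) / (2 * δ);
          (1 - γ) / (2 * δ), (γ + 1) / (2 * δ)] : Mat F).mulVec ![1, 1] = δ⁻¹ • ![1, 1] ∧
      (!![(γ + 1) / (2 * δ), (1 - γ) / (2 * δ);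
          (1 - γ) / (2 * δ), (γ + 1) / (2 * δ)] : Mat F).mulVec ![1, -1] = δ • ![1, -1] := by
  rintro γ δ hδ rfl -
  have hθ := coe_rmat_inv_mul_thetaSL_rmat hδ
  refine ⟨(rmat δ).2, image_conj_rmat_Tset hδ, hθ, ⟨_, _, hθ⟩, ?_, ?_⟩
  · rw [mulVec_one_one_of_symm]
    congr 1
    field_simp
    ring
  · rw [mulVec_one_neg_one_of_symm]
    congr 1
    field_simp
    ring

theorem rgamma_properties
    (p : ℕ) [Fact p.Prime] (hp2 : p ≠ 2)
    (F : Type) [Field F] [CharZero F] [TopologicalSpace F] [IsTopologicalRing F]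
    [MeasurableSpace F] [BorelSpace F]
    [Algebra ℚ_[p] F] [FiniteDimensional ℚ_[p] F]
    (ν : F → ℤ) (ϖ : F)
    (hϖ0 : ϖ ≠ 0) (hϖ1 : ν ϖ = 1)
    (hνmul : ∀ x y : F, x ≠ 0 → y ≠ 0 → ν (x * y) = ν x + ν y)
    (hνadd : ∀ x y : F, x ≠ 0 → y ≠ 0 → x + y ≠ 0 → min (ν x) (ν y) ≤ ν (x + y))
    (hνp : 0 < ν ((p : F)))
    (hνext : ∀ x : ℚ_[p], x ≠ 0 → ν (algebraMap ℚ_[p] F x) = ν ((p : F)) * x.valuation)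
    (hνnhds : ∀ s : Set F, s ∈ nhds (0 : F) ↔ ∃ n : ℤ, {x : F | x = 0 ∨ n ≤ ν x} ⊆ s) :
    ∀ γ δ : F, δ ≠ 0 → δ ^ 2 = γ → δ ≠ -1 →
      ((rmat δ : SL2 F) : Mat F).det = 1 ∧
      (fun g : SL2 F => (rmat δ)⁻¹ * g * rmat δ) '' Tset γ = (Aset : Set (SL2 F)) ∧
      (((rmat δ)⁻¹ * thetaSL (rmat δ) : SL2 F) : Mat F) =
        !![(γ + 1) / (2 * δ), (1 - γ) / (2 * δ); (1 - γ) / (2 * δ), (γ + 1) / (2 * δ)] ∧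
      ((rmat δ)⁻¹ * thetaSL (rmat δ) : SL2 F) ∈ (Aset : Set (SL2 F)) ∧
      (!![(γ + 1) / (2 * δ), (1 - γ) / (2 * δ);
          (1 - γ) / (2 * δ), (γ + 1) / (2 * δ)] : Mat F).mulVec ![1, 1] = δ⁻¹ • ![1, 1] ∧
      (!![(γ + 1) / (2 * δ), (1 - γ) / (2 * δ);
          (1 - γ) / (2 * δ), (γ + 1) / (2 * δ)] : Mat F).mulVec ![1, -1] = δ • ![1, -1] :=
  rgamma_properties_general F

end
end
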